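/- Let N ≥ 7 be an integer. Then for every t ∈ ((√6−√2)/2, 1) one has γ₂'(t) ≥ (N−2)·2t·(1−t²)^{-(N−1)} and γ₂(t) ≤ (1−t²)^{-(N−2)}, where γ₂' denotes the derivative of γ₂. -/

import Mathlib

open Real Filter Set

set_option maxHeartbeats 800000

/-- `γ₂(t) = (1−t²)^{-(N−2)} − 2·(√2·t)^{-(N−2)} + 2·(t⁴+1)^{-(N−2)/2} − (2t)^{-(N−2)} + (t²+1)^{-(N−2)}`. -/
noncomputable def gamma2 (N : ℕ) (t : ℝ) : ℝ :=
  (1 - t ^ 2) ^ (-((N : ℝ) - 2)) - 2 * (Real.sqrt 2 * t) ^ (-((N : ℝ) - 2)) +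
    2 * (t ^ 4 + 1) ^ (-((N : ℝ) - 2) / 2) - (2 * t) ^ (-((N : ℝ) - 2)) +
    (t ^ 2 + 1) ^ (-((N : ℝ) - 2))

theorem stmt_9 (N : ℕ) (hN : 7 ≤ N) :
    ∀ t ∈ Ioo ((Real.sqrt 6 - Real.sqrt 2) / 2) (1 : ℝ),
      ((N : ℝ) - 2) * (2 * t) * (1 - t ^ 2) ^ (-((N : ℝ) - 1)) ≤ deriv (gamma2 N) t ∧
      gamma2 N t ≤ (1 - t ^ 2) ^ (-((N : ℝ) - 2)) := by
  intro t ht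
  obtain ⟨hta, ht1⟩ := ht
  set p : ℝ := (N : ℝ) - 2 with hp_def
  have hN' : (7 : ℝ) ≤ (N : ℝ) := by exact_mod_cast hN
  have hp : (5 : ℝ) ≤ p := by simp [hp_def]; linarith
  have hp0 : 0 < p := by linarith
  have ht0 : 0 < t := by
    have h6 : Real.sqrt 2 < Real.sqrt 6 := by
      apply Real.sqrt_lt_sqrt <;> norm_num
    linarith
  have ht2 : t ^ 2 < 1 := by nlinarith
  have h1t2 : 0 < 1 - t ^ 2 := by linarith
  have hs2 : (0:ℝ) < Real.sqrt 2 := Real.sqrt_pos.mpr (by norm_num)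
  have hs2t : 0 < Real.sqrt 2 * t := by positivity
  have h2t : (0:ℝ) < 2 * t := by linarith
  have h41 : (0:ℝ) < t ^ 4 + 1 := by positivity
  have h21 : (0:ℝ) < t ^ 2 + 1 := by positivity
  have hsq : (Real.sqrt 2 * t) ^ (2:ℕ) = 2 * t ^ 2 := by
    rw [mul_pow, Real.sq_sqrt (by norm_num : (2:ℝ) ≥ 0)]
  -- key: (√2 t)^c = (2t²)^(c/2) for any c
  have hkey : ∀ c : ℝ, (2 * t ^ 2) ^ (c / 2) = (Real.sqrt 2 * t) ^ c := by
    intro c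
    rw [← hsq, ← Real.rpow_natCast (Real.sqrt 2 * t) 2, ← Real.rpow_mul hs2t.le]
    congr 1
    push_cast
    ring
  have h2t2le : 2 * t ^ 2 ≤ t ^ 4 + 1 := by nlinarith [sq_nonneg (t ^ 2 - 1)]
  have h2tle : 2 * t ≤ t ^ 2 + 1 := by nlinarith [sq_nonneg (t - 1)]
  constructor
  · -- derivative part
    have hd2 : HasDerivAt (fun x : ℝ => 1 - x ^ 2) (-(2 * t)) t := by
      simpa using ((hasDerivAt_pow 2 t).const_sub 1)
    have hd2' : HasDerivAt (fun x : ℝ => Real.sqrt 2 * x) (Real.sqrt 2) t := by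
      simpa using (hasDerivAt_id t).const_mul (Real.sqrt 2)
    have hd4 : HasDerivAt (fun x : ℝ => x ^ 4 + 1) (4 * t ^ 3) t := by
      simpa using ((hasDerivAt_pow 4 t).add_const 1)
    have hd2t : HasDerivAt (fun x : ℝ => 2 * x) (2:ℝ) t := by
      simpa using (hasDerivAt_id t).const_mul (2:ℝ)
    have hd21 : HasDerivAt (fun x : ℝ => x ^ 2 + 1) (2 * t) t := by
      simpa using ((hasDerivAt_pow 2 t).add_const 1)
    have hA := hd2.rpow_const (p := -p) (Or.inl h1t2.ne')
    have hB := hd2'.rpow_const (p := -p) (Or.inl hs2t.ne')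
    have hC := hd4.rpow_const (p := -p / 2) (Or.inl h41.ne')
    have hD := hd2t.rpow_const (p := -p) (Or.inl h2t.ne')
    have hE := hd21.rpow_const (p := -p) (Or.inl h21.ne')
    have hG : HasDerivAt (gamma2 N)
        ((-(2 * t) * -p * (1 - t ^ 2) ^ (-p - 1)
          - 2 * (Real.sqrt 2 * -p * (Real.sqrt 2 * t) ^ (-p - 1))
          + 2 * (4 * t ^ 3 * (-p / 2) * (t ^ 4 + 1) ^ (-p / 2 - 1))
          - 2 * -p * (2 * t) ^ (-p - 1))
          + 2 * t * -p * (t ^ 2 + 1) ^ (-p - 1)) t := by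
      exact ((((hA.sub (hB.const_mul 2)).add (hC.const_mul 2)).sub hD).add hE)
    rw [hG.deriv]
    have hexp : (1 - t ^ 2) ^ (-((N : ℝ) - 1)) = (1 - t ^ 2) ^ (-p - 1) := by
      congr 1; simp [hp_def]; ring
    rw [hexp]
    -- positivity of the rpow terms
    have pA : (0:ℝ) < (1 - t ^ 2) ^ (-p - 1) := Real.rpow_pos_of_pos h1t2 _
    have pB : (0:ℝ) < (Real.sqrt 2 * t) ^ (-p - 1) := Real.rpow_pos_of_pos hs2t _
    have pD : (0:ℝ) < (2 * t) ^ (-p - 1) := Real.rpow_pos_of_pos h2t _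
    -- sub-inequality A : 4 t^3 (t^4+1)^{-p/2-1} ≤ 2√2 (√2 t)^{-p-1}
    have sA : 4 * t ^ 3 * (t ^ 4 + 1) ^ (-p / 2 - 1) ≤
        2 * Real.sqrt 2 * (Real.sqrt 2 * t) ^ (-p - 1) := by
      have h1 : (t ^ 4 + 1) ^ (-p / 2 - 1) ≤ (2 * t ^ 2) ^ (-p / 2 - 1) :=
        Real.rpow_le_rpow_of_nonpos (by positivity) h2t2le (by linarith)
      have h2 : (2 * t ^ 2) ^ (-p / 2 - 1) = (Real.sqrt 2 * t) ^ (-p - 2) := by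
        rw [← hkey (-p - 2)]; congr 1; ring
      have h3 : (Real.sqrt 2 * t) ^ (-p - 2) =
          (Real.sqrt 2 * t) ^ (-p - 1) / (Real.sqrt 2 * t) := by
        rw [eq_div_iff hs2t.ne', ← Real.rpow_add_one hs2t.ne']
        congr 1; ring
      have h4 : 4 * t ^ 3 * (t ^ 4 + 1) ^ (-p / 2 - 1) ≤
          4 * t ^ 3 * ((Real.sqrt 2 * t) ^ (-p - 1) / (Real.sqrt 2 * t)) := by
        rw [← h3, ← h2]
        exact mul_le_mul_of_nonneg_left h1 (by positivity)
      have hs2sq : Real.sqrt 2 * Real.sqrt 2 = 2 :=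
        Real.mul_self_sqrt (by norm_num)
      have h5 : 4 * t ^ 3 * ((Real.sqrt 2 * t) ^ (-p - 1) / (Real.sqrt 2 * t)) =
          2 * Real.sqrt 2 * t ^ 2 * (Real.sqrt 2 * t) ^ (-p - 1) := by
        field_simp
        linear_combination (-2) * hs2sq
      rw [h5] at h4
      have h6 : 2 * Real.sqrt 2 * t ^ 2 * (Real.sqrt 2 * t) ^ (-p - 1) ≤
          2 * Real.sqrt 2 * (Real.sqrt 2 * t) ^ (-p - 1) := by
        nlinarith
      linarith
    -- sub-inequality B : 2 t (t^2+1)^{-p-1} ≤ 2 (2t)^{-p-1}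
    have sB : 2 * t * (t ^ 2 + 1) ^ (-p - 1) ≤ 2 * (2 * t) ^ (-p - 1) := by
      have h1 : (t ^ 2 + 1) ^ (-p - 1) ≤ (2 * t) ^ (-p - 1) :=
        Real.rpow_le_rpow_of_nonpos h2t h2tle (by linarith)
      nlinarith [Real.rpow_pos_of_pos h21 (-p - 1)]
    nlinarith [mul_le_mul_of_nonneg_left sA hp0.le,
      mul_le_mul_of_nonneg_left sB hp0.le]
  · -- value part
    have hCB : (t ^ 4 + 1) ^ (-p / 2) ≤ (Real.sqrt 2 * t) ^ (-p) := by
      rw [← hkey (-p)]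
      exact Real.rpow_le_rpow_of_nonpos (by positivity) h2t2le (by linarith)
    have hED : (t ^ 2 + 1) ^ (-p) ≤ (2 * t) ^ (-p) :=
      Real.rpow_le_rpow_of_nonpos h2t h2tle (by linarith)
    unfold gamma2
    simp only [← hp_def]
    linarith
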